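/- Let m ≥ 0 and let f, g : ℝ³ → ℝ be smooth and compactly supported. Let Y_m(x) = e^{−m‖x‖}/(4π‖x‖) be the Yukawa potential and (Y_m * f)(x) = ∫_{ℝ³} Y_m(x − y) f(y) dy its convolution with f. Then: ∫_{ℝ³} (1/2)(1 − ‖x‖²) g(x)² dx − ∫_{ℝ³} f(x)·[ (1/2)(1 − ‖x‖²)(Δf(x) − m² f(x)) − (x·∇f)(x) − f(x) − (m²/2)(Y_m * f)(x) ] dx = (1/2)∫_{ℝ³} (1 − ‖x‖²)( g(x)² + ‖∇f(x)‖² + m² f(x)² ) dx + ∫_{ℝ³} f(x)² dx + (m²/2)∫_{ℝ³}∫_{ℝ³} Y_m(x − y) f(x) f(y) dx dy. -/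

import Mathlib

open MeasureTheory Metric

/-- The `k`-th partial derivative of `f : ℝ^d → ℝ`. -/
noncomputable def pderiv' {d : ℕ} (f : EuclideanSpace ℝ (Fin d) → ℝ) (k : Fin d)
    (x : EuclideanSpace ℝ (Fin d)) : ℝ :=
  fderiv ℝ f x (EuclideanSpace.single k 1)

/-- The Laplacian `Δf = Σₖ ∂ₖ∂ₖ f` of `f : ℝ^d → ℝ`. -/
noncomputable def laplacian' {d : ℕ} (f : EuclideanSpace ℝ (Fin d) → ℝ)
    (x : EuclideanSpace ℝ (Fin d)) : ℝ :=
  ∑ k, fderiv ℝ (fun y => pderiv' f k y) x (EuclideanSpace.single k 1)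

/-- The radial derivative `x·∇f = r ∂_r f` of `f : ℝ^d → ℝ`. -/
noncomputable def radialDeriv' {d : ℕ} (f : EuclideanSpace ℝ (Fin d) → ℝ)
    (x : EuclideanSpace ℝ (Fin d)) : ℝ :=
  ∑ k, x k * pderiv' f k x

/-- The squared norm of the gradient `‖∇f‖²` of `f : ℝ^d → ℝ`. -/
noncomputable def gradNormSq' {d : ℕ} (f : EuclideanSpace ℝ (Fin d) → ℝ)
    (x : EuclideanSpace ℝ (Fin d)) : ℝ :=
  ∑ k, (pderiv' f k x) ^ 2


/-- The Yukawa potential `Y_m(x) = e^{-m‖x‖}/(4π‖x‖)` on `ℝ³`. -/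
noncomputable def yukawa (m : ℝ) (x : EuclideanSpace ℝ (Fin 3)) : ℝ :=
  Real.exp (-m * ‖x‖) / (4 * Real.pi * ‖x‖)


local notation "E3" => EuclideanSpace ℝ (Fin 3)

section aux
variable {f : E3 → ℝ}

lemma contDiff_pderiv (hf : ContDiff ℝ (⊤ : ℕ∞) f) (k : Fin 3) : ContDiff ℝ (⊤ : ℕ∞) (pderiv' f k) :=
  (hf.fderiv_right (by simp)).clm_apply contDiff_const

lemma hasCompactSupport_pderiv (hfs : HasCompactSupport f) (k : Fin 3) :
    HasCompactSupport (pderiv' f k) :=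
  (hfs.fderiv ℝ).comp_left (g := fun L : E3 →L[ℝ] ℝ => L (EuclideanSpace.single k 1)) rfl

lemma integral_fderiv_apply_eq_zero {h : E3 → ℝ} (hh : ContDiff ℝ (⊤ : ℕ∞) h)
    (hcs : HasCompactSupport h) (v : E3) :
    ∫ x : E3, fderiv ℝ h x v = 0 := by
  have h2 : Integrable (fun x : E3 => (1:ℝ) * fderiv ℝ h x v) := by
    simp only [one_mul]
    exact (((hh.fderiv_right (m := (⊤ : ℕ∞)) (by simp)).clm_apply contDiff_const).continuous).integrable_of_hasCompactSupport
      ((hcs.fderiv ℝ).comp_left (g := fun L : E3 →L[ℝ] ℝ => L v) rfl)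
  have h3 : Integrable (fun x : E3 => (1:ℝ) * h x) := by
    simp only [one_mul]
    exact hh.continuous.integrable_of_hasCompactSupport hcs
  have h1 : Integrable (fun x : E3 => (fderiv ℝ (fun _ : E3 => (1:ℝ)) x) v * h x) := by
    simp [fderiv_const]
  have := integral_mul_fderiv_eq_neg_fderiv_mul_of_integrable (μ := volume)
    h1 h2 h3 (fun x _ => differentiable_const (1:ℝ) x) (fun x _ => hh.differentiable (by simp) x)
  simpa [fderiv_fun_const] using this
end aux


section div
variable {f : E3 → ℝ}

lemma integrable_fderiv_apply {h : E3 → ℝ} (hh : ContDiff ℝ (⊤ : ℕ∞) h)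
    (hcs : HasCompactSupport h) (v : E3) :
    Integrable (fun x : E3 => fderiv ℝ h x v) :=
  (((hh.fderiv_right (m := (⊤ : ℕ∞)) (by simp)).clm_apply contDiff_const).continuous).integrable_of_hasCompactSupport
    ((hcs.fderiv ℝ).comp_left (g := fun L : E3 →L[ℝ] ℝ => L v) rfl)

lemma divergence_integral (hf : ContDiff ℝ (⊤ : ℕ∞) f) (hfs : HasCompactSupport f) :
    ∫ x : E3, ((1 - ‖x‖ ^ 2) * (f x * laplacian' f x + gradNormSq' f x)
      - 2 * (f x * radialDeriv' f x)) = 0 := by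
  set h : Fin 3 → E3 → ℝ := fun k y => (1 - ‖y‖ ^ 2) * (f y * pderiv' f k y) with hh
  have hAc : ContDiff ℝ (⊤ : ℕ∞) (fun y : E3 => 1 - ‖y‖ ^ 2) :=
    contDiff_const.sub (contDiff_norm_sq ℝ)
  have hhC : ∀ k, ContDiff ℝ (⊤ : ℕ∞) (h k) := fun k =>
    hAc.mul (hf.mul (contDiff_pderiv hf k))
  have hhS : ∀ k, HasCompactSupport (h k) := fun k =>
    HasCompactSupport.mul_left (hfs.mul_right)
  have key : ∀ x : E3, (1 - ‖x‖ ^ 2) * (f x * laplacian' f x + gradNormSq' f x)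
      - 2 * (f x * radialDeriv' f x)
      = ∑ k, fderiv ℝ (h k) x (EuclideanSpace.single k 1) := by
    intro x
    have hA : HasFDerivAt (fun y : E3 => 1 - ‖y‖ ^ 2) (-(2 • (innerSL ℝ) x)) x :=
      (hasStrictFDerivAt_norm_sq x).hasFDerivAt.const_sub 1
    have e : ∀ k, fderiv ℝ (h k) x (EuclideanSpace.single k 1)
        = (1 - ‖x‖ ^ 2) * (f x * fderiv ℝ (pderiv' f k) x (EuclideanSpace.single k 1)
            + pderiv' f k x * pderiv' f k x)
          - 2 * x k * (f x * pderiv' f k x) := by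
      intro k
      have h1 : fderiv ℝ (h k) x = (1 - ‖x‖ ^ 2) • fderiv ℝ (fun y => f y * pderiv' f k y) x
          + (f x * pderiv' f k x) • fderiv ℝ (fun y : E3 => 1 - ‖y‖ ^ 2) x :=
        fderiv_mul (hAc.differentiable (by simp)).differentiableAt
          ((hf.mul (contDiff_pderiv hf k)).differentiable (by simp)).differentiableAt
      have h2 : fderiv ℝ (fun y => f y * pderiv' f k y) x
          = f x • fderiv ℝ (pderiv' f k) x + pderiv' f k x • fderiv ℝ f x :=
        fderiv_mul (hf.differentiable (by simp)).differentiableAt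
          ((contDiff_pderiv hf k).differentiable (by simp)).differentiableAt
      have h3 : fderiv ℝ (fun y : E3 => 1 - ‖y‖ ^ 2) x = -(2 • (innerSL ℝ) x) := hA.fderiv
      rw [h1, h2, h3]
      simp only [ContinuousLinearMap.add_apply, ContinuousLinearMap.smul_apply,
        ContinuousLinearMap.neg_apply, smul_eq_mul, innerSL_apply_apply,
        EuclideanSpace.inner_single_right, conj_trivial, one_mul]
      have : fderiv ℝ f x (EuclideanSpace.single k 1) = pderiv' f k x := rfl
      rw [this]
      ring
    rw [Finset.sum_congr rfl fun k _ => e k]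
    simp only [laplacian', gradNormSq', radialDeriv', Fin.sum_univ_three]
    ring
  rw [integral_congr_ae (Filter.Eventually.of_forall key)]
  rw [integral_finset_sum _ (fun k _ => integrable_fderiv_apply (hhC k) (hhS k) _)]
  exact Finset.sum_eq_zero fun k _ => integral_fderiv_apply_eq_zero (hhC k) (hhS k) _
end div


lemma integrableOn_inv_norm_ball {R : ℝ} (hR : 0 < R) :
    IntegrableOn (fun x : E3 => ‖x‖⁻¹) (ball 0 R) := by
  constructor
  · exact (measurable_norm.inv).aestronglyMeasurable
  · rw [hasFiniteIntegral_iff_norm]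
    set c : ENNReal := volume (ball (0:E3) 1) with hc
    have hcfin : c < ⊤ := measure_ball_lt_top
    set S : ℕ → Set E3 := fun n => ball 0 (R / 2 ^ n) \ ball 0 (R / 2 ^ (n + 1)) with hS
    have hcover : ball (0:E3) R ⊆ {0} ∪ ⋃ n, S n := by
      intro x hx
      rcases eq_or_ne x 0 with rfl | hx0
      · exact Set.mem_union_left _ rfl
      · have hxpos : 0 < ‖x‖ := norm_pos_iff.2 hx0
        have hex : ∃ k, R / 2 ^ (k + 1) ≤ ‖x‖ := by
          obtain ⟨k, hk⟩ := pow_unbounded_of_one_lt (R / ‖x‖) (one_lt_two (α := ℝ))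
          refine ⟨k, ?_⟩
          rw [div_le_iff₀ (by positivity : (0:ℝ) < 2 ^ (k+1))]
          rw [div_lt_iff₀ hxpos] at hk
          have h2 : (2:ℝ) ^ k ≤ 2 ^ (k+1) := by
            apply pow_le_pow_right₀ (by norm_num) (by omega)
          nlinarith [hxpos]
        refine Set.mem_union_right _ (Set.mem_iUnion.2 ⟨Nat.find hex, ?_⟩)
        refine ⟨?_, fun hmem => ?_⟩
        · rw [mem_ball_zero_iff]
          rcases Nat.eq_zero_or_pos (Nat.find hex) with h0 | hpos
          · rw [h0]; simpa using (mem_ball_zero_iff.1 hx)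
          · obtain ⟨m, hm⟩ := Nat.exists_eq_succ_of_ne_zero hpos.ne'
            have := Nat.find_min hex (m := m) (by omega)
            rw [hm]
            exact lt_of_not_ge this
        · exact absurd (Nat.find_spec hex) (not_le.2 (mem_ball_zero_iff.1 hmem))
    calc ∫⁻ x in ball (0:E3) R, ENNReal.ofReal ‖(fun x : E3 => ‖x‖⁻¹) x‖
        ≤ ∫⁻ x in ({0} ∪ ⋃ n, S n : Set E3), ENNReal.ofReal ‖‖x‖⁻¹‖ :=
          lintegral_mono_set hcover
      _ ≤ (∫⁻ x in ({0} : Set E3), ENNReal.ofReal ‖‖x‖⁻¹‖)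
            + ∫⁻ x in (⋃ n, S n), ENNReal.ofReal ‖‖x‖⁻¹‖ := lintegral_union_le _ _ _
      _ ≤ 0 + ∑' n, ∫⁻ x in S n, ENNReal.ofReal ‖‖x‖⁻¹‖ := by
          gcongr
          · have : volume ({(0:E3)} : Set E3) = 0 := measure_singleton 0
            rw [setLIntegral_measure_zero _ _ this]
          · exact lintegral_iUnion_le _ _
      _ ≤ ∑' n, (ENNReal.ofReal (2 * R ^ 2) * ENNReal.ofReal ((1/4 : ℝ)) ^ n * c) := by
          rw [zero_add]
          gcongr with n
          have hb : ∀ x ∈ S n, ENNReal.ofReal ‖‖x‖⁻¹‖ ≤ ENNReal.ofReal (2 ^ (n+1) / R) := by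
            intro x hxS
            have hlow : R / 2 ^ (n+1) ≤ ‖x‖ := by
              have := hxS.2
              rw [mem_ball_zero_iff, not_lt] at this
              exact this
            have h1 : ‖x‖⁻¹ ≤ 2 ^ (n+1) / R := by
              rw [inv_le_comm₀ (lt_of_lt_of_le (by positivity) hlow) (by positivity),
                inv_div]
              exact hlow
            exact ENNReal.ofReal_le_ofReal (by
              rw [Real.norm_eq_abs, abs_of_nonneg (by positivity)]; exact h1)
          calc ∫⁻ x in S n, ENNReal.ofReal ‖‖x‖⁻¹‖
              ≤ ∫⁻ _x in S n, ENNReal.ofReal (2 ^ (n+1) / R) :=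
                setLIntegral_mono measurable_const hb
            _ = ENNReal.ofReal (2 ^ (n+1) / R) * volume (S n) := setLIntegral_const _ _
            _ ≤ ENNReal.ofReal (2 ^ (n+1) / R) * volume (ball (0:E3) (R / 2 ^ n)) := by
                gcongr
                exact Set.diff_subset
            _ = ENNReal.ofReal (2 ^ (n+1) / R) * (ENNReal.ofReal ((R / 2 ^ n) ^ 3) * c) := by
                rw [Measure.addHaar_ball volume 0 (by positivity), finrank_euclideanSpace_fin]
            _ = ENNReal.ofReal (2 * R ^ 2) * ENNReal.ofReal ((1/4 : ℝ)) ^ n * c := by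
                rw [← ENNReal.ofReal_pow (by norm_num), ← ENNReal.ofReal_mul (by positivity),
                  ← mul_assoc, ← ENNReal.ofReal_mul (by positivity)]
                congr 2
                field_simp
                have h4 : (2:ℝ)^n * 4^n = 2^(n*3) := by
                  rw [show (4:ℝ) = 2^2 by norm_num, ← pow_mul, ← pow_add]
                  ring_nf
                have h5 : (1/4:ℝ)^n * 4^n = 1 := by rw [← mul_pow]; norm_num
                linear_combination (2*(1/4:ℝ)^n) * h4 - (2*2^n) * h5
      _ < ⊤ := by
          rw [ENNReal.tsum_mul_right, ENNReal.tsum_mul_left, ENNReal.tsum_geometric]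
          refine ENNReal.mul_lt_top (ENNReal.mul_lt_top ENNReal.ofReal_lt_top ?_) hcfin
          rw [ENNReal.inv_lt_top]
          exact tsub_pos_of_lt (ENNReal.ofReal_lt_one.2 (by norm_num))


lemma yukawa_abs_le (m : ℝ) (hm : 0 ≤ m) (x : E3) :
    ‖yukawa m x‖ ≤ (4 * Real.pi)⁻¹ * ‖x‖⁻¹ := by
  have hpi := Real.pi_pos
  have hnn : 0 ≤ yukawa m x := div_nonneg (Real.exp_pos _).le (by positivity)
  rw [Real.norm_eq_abs, abs_of_nonneg hnn]
  rcases eq_or_ne x 0 with rfl | hx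
  · simp [yukawa]
  · have hxp : 0 < ‖x‖ := norm_pos_iff.2 hx
    have hexp : Real.exp (-m * ‖x‖) ≤ 1 := by
      rw [Real.exp_le_one_iff]
      have : 0 ≤ m * ‖x‖ := mul_nonneg hm hxp.le
      linarith
    calc yukawa m x ≤ 1 / (4 * Real.pi * ‖x‖) := by
          unfold yukawa; gcongr
      _ = (4 * Real.pi)⁻¹ * ‖x‖⁻¹ := by rw [one_div, mul_inv]

lemma yukawa_measurable (m : ℝ) : Measurable (yukawa m) :=
  ((Real.measurable_exp.comp (measurable_norm.const_mul (-m))).div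
    (measurable_norm.const_mul (4 * Real.pi)))

lemma yukawa_locallyIntegrable {m : ℝ} (hm : 0 ≤ m) :
    LocallyIntegrable (yukawa m) (volume : Measure E3) := by
  rw [locallyIntegrable_iff]
  intro K hK
  obtain ⟨R, hR0, hKR⟩ := hK.isBounded.subset_ball_lt 0 0
  have base : IntegrableOn (fun x : E3 => (4 * Real.pi)⁻¹ * ‖x‖⁻¹) (ball 0 R) :=
    (integrableOn_inv_norm_ball hR0).const_mul _
  have : IntegrableOn (yukawa m) (ball (0:E3) R) := by
    refine Integrable.mono' base ((yukawa_measurable m).aestronglyMeasurable) ?_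
    exact Filter.Eventually.of_forall fun x => yukawa_abs_le m hm x
  exact this.mono_set hKR

lemma conv_continuous {m : ℝ} (hm : 0 ≤ m) {f : E3 → ℝ} (hfc : Continuous f)
    (hfs : HasCompactSupport f) :
    Continuous (fun x : E3 => ∫ y, yukawa m (x - y) * f y) := by
  have hc : Continuous (convolution (yukawa m) f (ContinuousLinearMap.mul ℝ ℝ) volume) :=
    hfs.continuous_convolution_right _ (yukawa_locallyIntegrable hm) hfc
  have heq : (fun x : E3 => ∫ y, yukawa m (x - y) * f y)
      = convolution (yukawa m) f (ContinuousLinearMap.mul ℝ ℝ) volume := by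
    funext x
    rw [convolution_def]
    simp only [ContinuousLinearMap.mul_apply']
    have := MeasureTheory.integral_sub_left_eq_self
      (fun t : E3 => yukawa m t * f (x - t)) volume x
    simpa [sub_sub_cancel] using this
  rw [heq]; exact hc


/-- The quadratic form of the massive modular generator `K̃_m` on Cauchy data `(f, g)` in
`d = 3`: `∫ ½(1-r²)g² - ∫ f(½(1-r²)(Δf - m²f) - r∂_r f - f - (m²/2)Y_m*f)`
`= ½∫(1-r²)(g² + ‖∇f‖² + m²f²) + ∫f² + (m²/2)∫∫ Y_m(x-y)f(x)f(y)`. -/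
theorem massive_quadratic_form_identity (m : ℝ) (hm : 0 ≤ m)
    (f g : EuclideanSpace ℝ (Fin 3) → ℝ)
    (hf : ContDiff ℝ (⊤ : ℕ∞) f) (hfs : HasCompactSupport f)
    (hg : ContDiff ℝ (⊤ : ℕ∞) g) (hgs : HasCompactSupport g) :
    (∫ x : EuclideanSpace ℝ (Fin 3), (1 / 2) * (1 - ‖x‖ ^ 2) * (g x) ^ 2)
      - ∫ x : EuclideanSpace ℝ (Fin 3),
          f x * ((1 / 2) * (1 - ‖x‖ ^ 2) * (laplacian' f x - m ^ 2 * f x)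
            - radialDeriv' f x - f x
            - (m ^ 2 / 2) * ∫ y : EuclideanSpace ℝ (Fin 3), yukawa m (x - y) * f y)
    = (1 / 2) * (∫ x : EuclideanSpace ℝ (Fin 3),
          (1 - ‖x‖ ^ 2) * ((g x) ^ 2 + gradNormSq' f x + m ^ 2 * (f x) ^ 2))
        + (∫ x : EuclideanSpace ℝ (Fin 3), (f x) ^ 2)
        + (m ^ 2 / 2) * ∫ x : EuclideanSpace ℝ (Fin 3),
            ∫ y : EuclideanSpace ℝ (Fin 3), yukawa m (x - y) * f x * f y := by
  have hfc : Continuous f := hf.continuous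
  have hgc : Continuous g := hg.continuous
  have hPc : ∀ k, Continuous (pderiv' f k) := fun k => (contDiff_pderiv hf k).continuous
  have hwC : Continuous (fun x : E3 => 1 - ‖x‖ ^ 2) :=
    continuous_const.sub (continuous_norm.pow 2)
  have hlapC : Continuous (laplacian' f) := by
    apply continuous_finset_sum
    intro k _
    exact (((contDiff_pderiv hf k).fderiv_right (m := (⊤ : ℕ∞)) (by simp)).clm_apply
      contDiff_const).continuous
  have hradC : Continuous (radialDeriv' f) := by
    apply continuous_finset_sum
    intro k _
    exact ((EuclideanSpace.proj (𝕜 := ℝ) k).continuous).mul (hPc k)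
  have hgradC : Continuous (gradNormSq' f) := by
    apply continuous_finset_sum
    intro k _
    exact (hPc k).pow 2
  have hconvC : Continuous (fun x : E3 => ∫ y, yukawa m (x - y) * f y) :=
    conv_continuous hm hfc hfs
  have hP0 : ∀ k, ∀ x, x ∉ tsupport f → pderiv' f k x = 0 := by
    intro k x hx
    have : fderiv ℝ f x = 0 :=
      image_eq_zero_of_notMem_tsupport (fun h => hx (tsupport_fderiv_subset ℝ h))
    simp [pderiv', this]
  have hCSf : ∀ (u : E3 → ℝ), (∀ x, x ∉ tsupport f → u x = 0) → HasCompactSupport u :=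
    fun u hu => HasCompactSupport.intro hfs hu
  have hCSg : ∀ (u : E3 → ℝ), (∀ x, x ∉ tsupport g → u x = 0) → HasCompactSupport u :=
    fun u hu => HasCompactSupport.intro hgs hu
  have hf0 : ∀ x, x ∉ tsupport f → f x = 0 := fun x hx => image_eq_zero_of_notMem_tsupport hx
  have hg0 : ∀ x, x ∉ tsupport g → g x = 0 := fun x hx => image_eq_zero_of_notMem_tsupport hx
  -- integrable pieces
  have hA1 : Integrable (fun x : E3 => (1 - ‖x‖ ^ 2) * (g x) ^ 2) :=
    (hwC.mul (hgc.pow 2)).integrable_of_hasCompactSupport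
      (hCSg _ fun x hx => by simp [hg0 x hx])
  have hA2 : Integrable (fun x : E3 => (1 - ‖x‖ ^ 2) * gradNormSq' f x) :=
    (hwC.mul hgradC).integrable_of_hasCompactSupport
      (hCSf _ fun x hx => by simp [gradNormSq', hP0 _ x hx])
  have hA3 : Integrable (fun x : E3 => (1 - ‖x‖ ^ 2) * (f x) ^ 2) :=
    (hwC.mul (hfc.pow 2)).integrable_of_hasCompactSupport
      (hCSf _ fun x hx => by simp [hf0 x hx])
  have hA4 : Integrable (fun x : E3 => (f x) ^ 2) :=
    (hfc.pow 2).integrable_of_hasCompactSupport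
      (hCSf _ fun x hx => by simp [hf0 x hx])
  have hA5 : Integrable (fun x : E3 => f x * ∫ y, yukawa m (x - y) * f y) :=
    (hfc.mul hconvC).integrable_of_hasCompactSupport
      (hCSf _ fun x hx => by simp [hf0 x hx])
  have hA6 : Integrable (fun x : E3 => (1 - ‖x‖ ^ 2) * (f x * laplacian' f x)) :=
    (hwC.mul (hfc.mul hlapC)).integrable_of_hasCompactSupport
      (hCSf _ fun x hx => by simp [hf0 x hx])
  have hA7 : Integrable (fun x : E3 => f x * radialDeriv' f x) :=
    (hfc.mul hradC).integrable_of_hasCompactSupport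
      (hCSf _ fun x hx => by simp [hf0 x hx])
  -- combined integrable pieces, with explicit statements
  have hB6 : Integrable (fun x : E3 => (1/2) * ((1 - ‖x‖ ^ 2) * (f x * laplacian' f x))) :=
    hA6.const_mul _
  have hB3 : Integrable (fun x : E3 => (m^2/2) * ((1 - ‖x‖ ^ 2) * (f x) ^ 2)) :=
    hA3.const_mul _
  have hB5 : Integrable (fun x : E3 => (m^2/2) * (f x * ∫ y, yukawa m (x - y) * f y)) :=
    hA5.const_mul _
  have hS2 : Integrable (fun x : E3 => (1/2) * ((1 - ‖x‖ ^ 2) * (f x * laplacian' f x))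
      - (m^2/2) * ((1 - ‖x‖ ^ 2) * (f x) ^ 2)) := hB6.sub hB3
  have hS3 : Integrable (fun x : E3 => (1/2) * ((1 - ‖x‖ ^ 2) * (f x * laplacian' f x))
      - (m^2/2) * ((1 - ‖x‖ ^ 2) * (f x) ^ 2) - f x * radialDeriv' f x) := hS2.sub hA7
  have hS4 : Integrable (fun x : E3 => (1/2) * ((1 - ‖x‖ ^ 2) * (f x * laplacian' f x))
      - (m^2/2) * ((1 - ‖x‖ ^ 2) * (f x) ^ 2) - f x * radialDeriv' f x - (f x) ^ 2) :=
    hS3.sub hA4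
  -- step 1 : expand the big integral on the left
  have e1 : (∫ x : E3,
        f x * ((1 / 2) * (1 - ‖x‖ ^ 2) * (laplacian' f x - m ^ 2 * f x)
          - radialDeriv' f x - f x
          - (m ^ 2 / 2) * ∫ y, yukawa m (x - y) * f y))
      = (1/2) * (∫ x : E3, (1 - ‖x‖ ^ 2) * (f x * laplacian' f x))
        - (m^2/2) * (∫ x : E3, (1 - ‖x‖ ^ 2) * (f x) ^ 2)
        - (∫ x : E3, f x * radialDeriv' f x)
        - (∫ x : E3, (f x) ^ 2)
        - (m^2/2) * (∫ x : E3, f x * ∫ y, yukawa m (x - y) * f y) := by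
    rw [show (fun x : E3 =>
        f x * ((1 / 2) * (1 - ‖x‖ ^ 2) * (laplacian' f x - m ^ 2 * f x)
          - radialDeriv' f x - f x
          - (m ^ 2 / 2) * ∫ y, yukawa m (x - y) * f y))
      = fun x : E3 => (1/2) * ((1 - ‖x‖ ^ 2) * (f x * laplacian' f x))
          - (m^2/2) * ((1 - ‖x‖ ^ 2) * (f x) ^ 2)
          - f x * radialDeriv' f x - (f x) ^ 2
          - (m^2/2) * (f x * ∫ y, yukawa m (x - y) * f y)
      from funext fun x => by ring]
    rw [integral_sub hS4 hB5, integral_sub hS3 hA4, integral_sub hS2 hA7,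
      integral_sub hB6 hB3, integral_const_mul, integral_const_mul, integral_const_mul]
  -- step 2 : expand the energy integral on the right
  have hS5 : Integrable (fun x : E3 => (1 - ‖x‖ ^ 2) * (g x) ^ 2
      + (1 - ‖x‖ ^ 2) * gradNormSq' f x) := hA1.add hA2
  have hB3' : Integrable (fun x : E3 => m^2 * ((1 - ‖x‖ ^ 2) * (f x) ^ 2)) := hA3.const_mul _
  have e2 : (∫ x : E3, (1 - ‖x‖ ^ 2) * ((g x) ^ 2 + gradNormSq' f x + m ^ 2 * (f x) ^ 2))
      = (∫ x : E3, (1 - ‖x‖ ^ 2) * (g x) ^ 2)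
        + (∫ x : E3, (1 - ‖x‖ ^ 2) * gradNormSq' f x)
        + m^2 * (∫ x : E3, (1 - ‖x‖ ^ 2) * (f x) ^ 2) := by
    rw [show (fun x : E3 => (1 - ‖x‖ ^ 2) * ((g x) ^ 2 + gradNormSq' f x + m ^ 2 * (f x) ^ 2))
      = fun x : E3 => ((1 - ‖x‖ ^ 2) * (g x) ^ 2 + (1 - ‖x‖ ^ 2) * gradNormSq' f x)
          + m^2 * ((1 - ‖x‖ ^ 2) * (f x) ^ 2)
      from funext fun x => by ring]
    rw [integral_add hS5 hB3', integral_add hA1 hA2, integral_const_mul]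
  -- step 3 : the double integral
  have e3 : (∫ x : E3, ∫ y : E3, yukawa m (x - y) * f x * f y)
      = ∫ x : E3, f x * ∫ y, yukawa m (x - y) * f y := by
    refine integral_congr_ae (Filter.Eventually.of_forall fun x => ?_)
    dsimp only
    rw [show (fun y : E3 => yukawa m (x - y) * f x * f y)
      = fun y : E3 => f x * (yukawa m (x - y) * f y) from funext fun y => by ring,
      integral_const_mul]
  -- step 4 : first integral on the left
  have e4 : (∫ x : E3, (1 / 2) * (1 - ‖x‖ ^ 2) * (g x) ^ 2)
      = (1/2) * ∫ x : E3, (1 - ‖x‖ ^ 2) * (g x) ^ 2 := by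
    rw [show (fun x : E3 => (1 / 2) * (1 - ‖x‖ ^ 2) * (g x) ^ 2)
      = fun x : E3 => (1/2) * ((1 - ‖x‖ ^ 2) * (g x) ^ 2) from funext fun x => by ring,
      integral_const_mul]
  -- step 5 : the divergence identity, split into pieces
  have hS6 : Integrable (fun x : E3 => (1 - ‖x‖ ^ 2) * (f x * laplacian' f x)
      + (1 - ‖x‖ ^ 2) * gradNormSq' f x) := hA6.add hA2
  have hB7 : Integrable (fun x : E3 => (2:ℝ) * (f x * radialDeriv' f x)) := hA7.const_mul _
  have e5 : (∫ x : E3, (1 - ‖x‖ ^ 2) * (f x * laplacian' f x))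
      + (∫ x : E3, (1 - ‖x‖ ^ 2) * gradNormSq' f x)
      - 2 * (∫ x : E3, f x * radialDeriv' f x) = 0 := by
    have hdiv := divergence_integral hf hfs
    rw [show (fun x : E3 => ((1 - ‖x‖ ^ 2) * (f x * laplacian' f x + gradNormSq' f x)
        - 2 * (f x * radialDeriv' f x)))
      = fun x : E3 => ((1 - ‖x‖ ^ 2) * (f x * laplacian' f x)
          + (1 - ‖x‖ ^ 2) * gradNormSq' f x) - 2 * (f x * radialDeriv' f x)
      from funext fun x => by ring] at hdiv
    rw [integral_sub hS6 hB7, integral_add hA6 hA2, integral_const_mul] at hdiv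
    linarith
  rw [e1, e2, e3, e4]
  linarith
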